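/- arXiv:1904.06533 — 5 statements merged into one kernel-verified Lean document; each statement's English description precedes it below -/
import Mathlib

section
/- Let V be an n-dimensional real inner product space. For any α₁, …, α_k ∈ V, k · |α₁ ∧ ⋯ ∧ α_k|² = |Σ_{i=1}^{k} (-1)^{i-1} α_i ⊗ α₁ ∧ ⋯ ∧ \widehat{α_i} ∧ ⋯ ∧ α_k|², where the norms on ⋀^k V and on V ⊗ ⋀^{k-1} V are induced by the inner product via ⟨v₁∧…∧v_k, w₁∧…∧w_k⟩ = det(⟨v_i, w_j⟩) and ⟨v₀⊗ω, w₀⊗η⟩ = ⟨v₀,w₀⟩⟨ω,η⟩, and \widehat{α_i} denotes omission of α_i. -/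
open RealInnerProductSpace

theorem Matrix.natCast_succ_mul_det_eq_sum_det_succ_row {R : Type*} [CommRing R] {k : ℕ}
    (A : Matrix (Fin (k + 1)) (Fin (k + 1)) R) :
    ((k : R) + 1) * A.det =
      ∑ i : Fin (k + 1), ∑ j : Fin (k + 1),
        (-1 : R) ^ ((i : ℕ) + (j : ℕ)) * A i j * (A.submatrix i.succAbove j.succAbove).det := by
  calc ((k : R) + 1) * A.det = ∑ _i : Fin (k + 1), A.det := by simp [add_mul]
    _ = _ := Finset.sum_congr rfl fun i _ => A.det_succ_row i

/-- Both norms are expanded through the Gram-determinant inner products; the `i`-th summand of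
the tensor paired with the `j`-th gives the `(i, j)` term, so the right side is the Laplace expansion
of the Gram determinant along every row, summed over the rows. -/
theorem wedge_norm_sq_eq_tensor_norm_sq
    {V : Type*} [NormedAddCommGroup V] [InnerProductSpace ℝ V]
    (k : ℕ) (α : Fin (k + 1) → V) :
    ((k : ℝ) + 1) * (Matrix.of fun i j => (⟪α i, α j⟫ : ℝ)).det =
      ∑ i : Fin (k + 1), ∑ j : Fin (k + 1),
        (-1 : ℝ) ^ ((i : ℕ) + (j : ℕ)) * ⟪α i, α j⟫ *
          (Matrix.of fun a b : Fin k => (⟪α (i.succAbove a), α (j.succAbove b)⟫ : ℝ)).det :=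
  Matrix.natCast_succ_mul_det_eq_sum_det_succ_row _
end

section
/- Let V be an n-dimensional real inner product space with orthonormal basis e₁,…,e_n, let 0 ≤ k ≤ n, and define Q₁ : ⋀^{k+1} V → V ⊗ ⋀^k V by Q₁(ζ) = (1/(k+1))^{1/2} Σ_{i=1}^{n} e_i ⊗ ι(e_i)ζ and Q₂ : ⋀^{k-1} V → V ⊗ ⋀^k V by Q₂(η) = (1/(n-k+1))^{1/2} Σ_{i=1}^{n} e_i ⊗ (e_i ∧ η). Then Q₁ and Q₂ are norm-preserving linear maps and their images are orthogonal subspaces of V ⊗ ⋀^k V. -/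
/-!
On decomposables, Laplace expansion of the Gram determinant along the first column gives
`ι(v)(u₀ ∧ ⋯ ∧ u_k) = ∑ⱼ (-1)ʲ ⟪uⱼ, v⟫ u₀ ∧ ⋯ ûⱼ ⋯ ∧ u_k`, so by Parseval
`∑ᵢ ⟪ι(eᵢ)ζ, ι(eᵢ)ζ'⟫` becomes `tr (adj G * G) = (k + 1) det G` for the Gram matrix `G`.
Expanding the bordered Gram determinant of `(eᵢ, u)` along its first row and column gives in
the same way `∑ᵢ ⟪eᵢ ∧ η, eᵢ ∧ η'⟫ = (n - (k - 1)) ⟪η, η'⟫`. Both identities are between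
bilinear forms, so checking them on decomposables suffices, and since
`⟪∑ᵢ eᵢ ⊗ aᵢ, ∑ᵢ eᵢ ⊗ bᵢ⟫ = ∑ᵢ ⟪aᵢ, bᵢ⟫` they are exactly the isometry statements.
Orthogonality is adjointness: `⟪ι(eᵢ)ζ, eᵢ ∧ η⟫ = ⟪ζ, eᵢ ∧ eᵢ ∧ η⟫ = 0`.
-/

open RealInnerProductSpace Matrix

theorem Matrix.det_succ_eq_mul_det_sub_dotProduct_adjugate_mulVec {R : Type*} [CommRing R]
    {m : ℕ} (M : Matrix (Fin (m + 1)) (Fin (m + 1)) R) :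
    M.det = M 0 0 * (M.submatrix Fin.succ Fin.succ).det -
      (fun l => M 0 l.succ) ⬝ᵥ
        (adjugate (M.submatrix Fin.succ Fin.succ) *ᵥ fun j => M j.succ 0) := by
  rcases m with _ | m
  · simp [det_unique]
  set G := M.submatrix Fin.succ Fin.succ
  have hminor : ∀ l : Fin (m + 1), (M.submatrix Fin.succ l.succ.succAbove).det =
      ∑ j : Fin (m + 1),
        (-1) ^ (j : ℕ) * M j.succ 0 * (G.submatrix j.succAbove l.succAbove).det := by
    intro l
    rw [det_succ_column_zero]
    refine Finset.sum_congr rfl fun j _ => ?_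
    simp [G, Fin.succ_succAbove_succ, submatrix_submatrix, Function.comp_def]
  rw [det_succ_row_zero, Fin.sum_univ_succ]
  simp only [Fin.succAbove_zero, hminor, dotProduct, mulVec, adjugate_fin_succ_eq_det_submatrix,
    Finset.mul_sum, ← Finset.sum_neg_distrib, sub_eq_add_neg]
  congr 1
  · simp [G]
  refine Finset.sum_congr rfl fun l _ => Finset.sum_congr rfl fun j _ => ?_
  simp only [Fin.val_succ, pow_add, pow_one]
  ring

theorem Matrix.trace_adjugate_mul {n R : Type*} [Fintype n] [DecidableEq n] [CommRing R]
    (A : Matrix n n R) : trace (adjugate A * A) = Fintype.card n * A.det := by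
  rw [adjugate_mul, trace_smul, trace_one, smul_eq_mul, mul_comm]

section Gram

variable {V : Type*} [NormedAddCommGroup V] [InnerProductSpace ℝ V]

def innerMatrix {κ κ' : Type*} (u : κ → V) (u' : κ' → V) : Matrix κ κ' ℝ :=
  Matrix.of fun a b => ⟪u a, u' b⟫

theorem det_innerMatrix_cons {m : ℕ} (v : V) (u u' : Fin m → V) :
    (innerMatrix (Fin.cons v u : Fin (m + 1) → V) (Fin.cons v u')).det =
      ⟪v, v⟫ * (innerMatrix u u').det -
        (fun l => ⟪u' l, v⟫) ⬝ᵥ (adjugate (innerMatrix u u') *ᵥ fun j => ⟪u j, v⟫) := by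
  have hminor : (innerMatrix (Fin.cons v u : Fin (m + 1) → V) (Fin.cons v u')).submatrix
      Fin.succ Fin.succ = innerMatrix u u' := rfl
  rw [det_succ_eq_mul_det_sub_dotProduct_adjugate_mulVec, hminor]
  simp only [innerMatrix, of_apply, Fin.cons_zero, Fin.cons_succ, real_inner_comm v]

variable {ι : Type*} [Fintype ι] (b : OrthonormalBasis ι ℝ V)

theorem OrthonormalBasis.sum_dotProduct_mulVec_inner {κ : Type*} [Fintype κ]
    (A : Matrix κ κ ℝ) (u u' : κ → V) :
    ∑ i, (fun l => ⟪u' l, b i⟫) ⬝ᵥ (A *ᵥ fun j => ⟪u j, b i⟫) = trace (A * innerMatrix u u') := by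
  simp only [dotProduct, mulVec, trace, diag, mul_apply, innerMatrix, of_apply, Finset.mul_sum]
  rw [Finset.sum_comm]
  refine Finset.sum_congr rfl fun l _ => ?_
  rw [Finset.sum_comm]
  refine Finset.sum_congr rfl fun j _ => ?_
  rw [← b.sum_inner_mul_inner (u j) (u' l), Finset.mul_sum]
  refine Finset.sum_congr rfl fun i _ => ?_
  rw [real_inner_comm (u' l)]
  ring

theorem OrthonormalBasis.sum_dotProduct_adjugate_mulVec_inner {m : ℕ} (u u' : Fin m → V) :
    ∑ i, (fun l => ⟪u' l, b i⟫) ⬝ᵥ (adjugate (innerMatrix u u') *ᵥ fun j => ⟪u j, b i⟫) =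
      m * (innerMatrix u u').det := by
  rw [b.sum_dotProduct_mulVec_inner, trace_adjugate_mul, Fintype.card_fin]

theorem OrthonormalBasis.sum_det_innerMatrix_cons {m : ℕ} (u u' : Fin m → V) :
    ∑ i, (innerMatrix (Fin.cons (b i) u : Fin (m + 1) → V) (Fin.cons (b i) u')).det =
      (Fintype.card ι - m) * (innerMatrix u u').det := by
  simp only [det_innerMatrix_cons, inner_self_eq_one_of_norm_eq_one (b.orthonormal.1 _), one_mul,
    Finset.sum_sub_distrib, b.sum_dotProduct_adjugate_mulVec_inner, Finset.sum_const,
    Finset.card_univ, nsmul_eq_mul]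
  ring

end Gram

section InnerProductSpace

variable {V W W' : Type*} [NormedAddCommGroup V] [InnerProductSpace ℝ V]
  [NormedAddCommGroup W] [InnerProductSpace ℝ W] [NormedAddCommGroup W'] [InnerProductSpace ℝ W']

theorem Orthonormal.inner_sum_apply_sum_apply {ι : Type*} [Fintype ι] {e : ι → V}
    (he : Orthonormal ℝ e) (T : V → W → W')
    (hT : ∀ (v v' : V) (ω ω' : W), ⟪T v ω, T v' ω'⟫ = ⟪v, v'⟫ * ⟪ω, ω'⟫) (f g : ι → W) :
    ⟪∑ i, T (e i) (f i), ∑ i, T (e i) (g i)⟫ = ∑ i, ⟪f i, g i⟫ := by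
  classical
  simp only [sum_inner, inner_sum, hT, orthonormal_iff_ite.mp he, ite_mul, one_mul, zero_mul,
    Finset.sum_ite_eq', Finset.mem_univ, if_true]

theorem norm_sqrt_one_div_smul_eq {x : W} {y : W'} {c : ℝ} (hc : 0 < c)
    (h : ⟪x, x⟫ = c * ⟪y, y⟫) : ‖√(1 / c) • x‖ = ‖y‖ := by
  have hx : ‖x‖ = √c * ‖y‖ := by
    rw [← Real.sqrt_sq (norm_nonneg x), ← real_inner_self_eq_norm_sq, h,
      real_inner_self_eq_norm_sq, Real.sqrt_mul hc.le, Real.sqrt_sq (norm_nonneg y)]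
  rw [norm_smul, hx, Real.norm_of_nonneg (Real.sqrt_nonneg _), ← mul_assoc,
    ← Real.sqrt_mul (by positivity), one_div_mul_cancel hc.ne', Real.sqrt_one, one_mul]

theorem sum_inner_map_map_eq_of_span_range {ι κ : Type*} [Fintype ι] {g : κ → W}
    (hg : Submodule.span ℝ (Set.range g) = ⊤) (A : ι → W →ₗ[ℝ] W') (c : ℝ)
    (h : ∀ a a', ∑ i, ⟪A i (g a), A i (g a')⟫ = c * ⟪g a, g a'⟫) (x y : W) :
    ∑ i, ⟪A i x, A i y⟫ = c * ⟪x, y⟫ := by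
  have hform : ∑ i, (innerₗ W').compl₁₂ (A i) (A i) = c • innerₗ W :=
    LinearMap.ext_on_range hg fun a => LinearMap.ext_on_range hg fun a' => by simpa using h a a'
  simpa using LinearMap.congr_fun₂ hform x y

end InnerProductSpace

section ExteriorPower

variable {V : Type*} [NormedAddCommGroup V] [InnerProductSpace ℝ V] {m : ℕ}
  {W₀ W₁ : Type*} [NormedAddCommGroup W₀] [InnerProductSpace ℝ W₀]
  [NormedAddCommGroup W₁] [InnerProductSpace ℝ W₁]

theorem iota_apply_eq_sum {w₀ : (Fin m → V) → W₀}
    (hw₀_span : Submodule.span ℝ (Set.range w₀) = ⊤)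
    (hw₀_inner : ∀ u u', ⟪w₀ u, w₀ u'⟫ = (innerMatrix u u').det)
    {w₁ : (Fin (m + 1) → V) → W₁} (hw₁_inner : ∀ u u', ⟪w₁ u, w₁ u'⟫ = (innerMatrix u u').det)
    {wedge : V →ₗ[ℝ] W₀ →ₗ[ℝ] W₁} (hwedge : ∀ v u, wedge v (w₀ u) = w₁ (Fin.cons v u))
    {iota : V →ₗ[ℝ] W₁ →ₗ[ℝ] W₀} (hiota : ∀ v ζ ω, ⟪iota v ζ, ω⟫ = ⟪ζ, wedge v ω⟫)
    (v : V) (u : Fin (m + 1) → V) :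
    iota v (w₁ u) = ∑ j : Fin (m + 1), ((-1) ^ (j : ℕ) * ⟪u j, v⟫) • w₀ (u ∘ j.succAbove) := by
  refine ext_inner_right ℝ fun ω => LinearMap.congr_fun
    (LinearMap.ext_on_range (f := innerₗ W₀ _) (g := innerₗ W₀ _) hw₀_span fun u' => ?_) ω
  simp only [innerₗ_apply_apply, hiota, hwedge, hw₁_inner, sum_inner, real_inner_smul_left,
    hw₀_inner, det_succ_column_zero]
  rfl

theorem inner_iota_apply_iota_apply_eq_sum {w₀ : (Fin m → V) → W₀}
    (hw₀_span : Submodule.span ℝ (Set.range w₀) = ⊤)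
    (hw₀_inner : ∀ u u', ⟪w₀ u, w₀ u'⟫ = (innerMatrix u u').det)
    {w₁ : (Fin (m + 1) → V) → W₁} (hw₁_inner : ∀ u u', ⟪w₁ u, w₁ u'⟫ = (innerMatrix u u').det)
    {wedge : V →ₗ[ℝ] W₀ →ₗ[ℝ] W₁} (hwedge : ∀ v u, wedge v (w₀ u) = w₁ (Fin.cons v u))
    {iota : V →ₗ[ℝ] W₁ →ₗ[ℝ] W₀} (hiota : ∀ v ζ ω, ⟪iota v ζ, ω⟫ = ⟪ζ, wedge v ω⟫)
    (v v' : V) (u u' : Fin (m + 1) → V) :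
    ⟪iota v (w₁ u), iota v' (w₁ u')⟫ =
      (fun l => ⟪u' l, v'⟫) ⬝ᵥ (adjugate (innerMatrix u u') *ᵥ fun j => ⟪u j, v⟫) := by
  have hiota_apply := iota_apply_eq_sum hw₀_span hw₀_inner hw₁_inner hwedge hiota
  simp only [hiota_apply, sum_inner, inner_sum, real_inner_smul_left, real_inner_smul_right,
    hw₀_inner, dotProduct, mulVec, adjugate_fin_succ_eq_det_submatrix, Finset.mul_sum]
  refine Finset.sum_congr rfl fun l _ => Finset.sum_congr rfl fun j _ => ?_
  rw [pow_add]
  simp only [innerMatrix, submatrix, Function.comp_apply, of_apply]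
  ring

theorem OrthonormalBasis.sum_inner_iota_apply_iota_apply_eq_sum {ι : Type*} [Fintype ι]
    (b : OrthonormalBasis ι ℝ V) {w₀ : (Fin m → V) → W₀}
    (hw₀_span : Submodule.span ℝ (Set.range w₀) = ⊤)
    (hw₀_inner : ∀ u u', ⟪w₀ u, w₀ u'⟫ = (innerMatrix u u').det)
    {w₁ : (Fin (m + 1) → V) → W₁} (hw₁_span : Submodule.span ℝ (Set.range w₁) = ⊤)
    (hw₁_inner : ∀ u u', ⟪w₁ u, w₁ u'⟫ = (innerMatrix u u').det)
    {wedge : V →ₗ[ℝ] W₀ →ₗ[ℝ] W₁} (hwedge : ∀ v u, wedge v (w₀ u) = w₁ (Fin.cons v u))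
    {iota : V →ₗ[ℝ] W₁ →ₗ[ℝ] W₀} (hiota : ∀ v ζ ω, ⟪iota v ζ, ω⟫ = ⟪ζ, wedge v ω⟫)
    (ζ ζ' : W₁) :
    ∑ i, ⟪iota (b i) ζ, iota (b i) ζ'⟫ = (m + 1) * ⟪ζ, ζ'⟫ := by
  refine sum_inner_map_map_eq_of_span_range hw₁_span (fun i => iota (b i)) _ (fun u u' => ?_) ζ ζ'
  simp only [inner_iota_apply_iota_apply_eq_sum hw₀_span hw₀_inner hw₁_inner hwedge hiota,
    b.sum_dotProduct_adjugate_mulVec_inner, hw₁_inner]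
  push_cast
  rfl

theorem OrthonormalBasis.sum_inner_wedge_apply_wedge_apply {ι : Type*}
    [Fintype ι] (b : OrthonormalBasis ι ℝ V) {w₀ : (Fin m → V) → W₀}
    (hw₀_span : Submodule.span ℝ (Set.range w₀) = ⊤)
    (hw₀_inner : ∀ u u', ⟪w₀ u, w₀ u'⟫ = (innerMatrix u u').det)
    {w₁ : (Fin (m + 1) → V) → W₁} (hw₁_inner : ∀ u u', ⟪w₁ u, w₁ u'⟫ = (innerMatrix u u').det)
    {wedge : V →ₗ[ℝ] W₀ →ₗ[ℝ] W₁} (hwedge : ∀ v u, wedge v (w₀ u) = w₁ (Fin.cons v u))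
    (η η' : W₀) :
    ∑ i, ⟪wedge (b i) η, wedge (b i) η'⟫ = (Fintype.card ι - m) * ⟪η, η'⟫ := by
  refine sum_inner_map_map_eq_of_span_range hw₀_span (fun i => wedge (b i)) _ (fun u u' => ?_) η η'
  simp only [hwedge, hw₁_inner, hw₀_inner, b.sum_det_innerMatrix_cons]

theorem wedge_apply_wedge_apply_self {W₂ : Type*} [NormedAddCommGroup W₂]
    [InnerProductSpace ℝ W₂] {w₀ : (Fin m → V) → W₀}
    (hw₀_span : Submodule.span ℝ (Set.range w₀) = ⊤) {w₁ : (Fin (m + 1) → V) → W₁}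
    {w₂ : (Fin (m + 2) → V) → W₂} (hw₂_inner : ∀ u u', ⟪w₂ u, w₂ u'⟫ = (innerMatrix u u').det)
    {wedge₀ : V →ₗ[ℝ] W₀ →ₗ[ℝ] W₁} (hwedge₀ : ∀ v u, wedge₀ v (w₀ u) = w₁ (Fin.cons v u))
    {wedge₁ : V →ₗ[ℝ] W₁ →ₗ[ℝ] W₂} (hwedge₁ : ∀ v u, wedge₁ v (w₁ u) = w₂ (Fin.cons v u))
    (v : V) (η : W₀) : wedge₁ v (wedge₀ v η) = 0 := by
  refine LinearMap.congr_fun (LinearMap.ext_on_range (f := wedge₁ v ∘ₗ wedge₀ v) (g := 0)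
    hw₀_span fun u => ?_) η
  rw [LinearMap.comp_apply, hwedge₀, hwedge₁, LinearMap.zero_apply, ← inner_self_eq_zero (𝕜 := ℝ),
    hw₂_inner]
  exact det_zero_of_row_eq (i := 0) (j := 1) zero_ne_one rfl

end ExteriorPower

theorem Q1_Q2_isometric_orthogonal_general
    {V : Type*} [NormedAddCommGroup V] [InnerProductSpace ℝ V]
    (n k : ℕ) (hk : k ≤ n)
    -- `⋀^k V`
    (Wk : Type*) [NormedAddCommGroup Wk] [InnerProductSpace ℝ Wk]
    (wk : (Fin k → V) → Wk)
    (hwk_span : Submodule.span ℝ (Set.range wk) = ⊤)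
    (hwk_inner : ∀ u v : Fin k → V,
      (⟪wk u, wk v⟫ : ℝ) = (Matrix.of fun i j => (⟪u i, v j⟫ : ℝ)).det)
    -- `⋀^{k+1} V`
    (Wup : Type*) [NormedAddCommGroup Wup] [InnerProductSpace ℝ Wup]
    (wup : (Fin (k + 1) → V) → Wup)
    (hwup_span : Submodule.span ℝ (Set.range wup) = ⊤)
    (hwup_inner : ∀ u v : Fin (k + 1) → V,
      (⟪wup u, wup v⟫ : ℝ) = (Matrix.of fun i j => (⟪u i, v j⟫ : ℝ)).det)
    -- `⋀^{k-1} V`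
    (Wdn : Type*) [NormedAddCommGroup Wdn] [InnerProductSpace ℝ Wdn]
    (wdn : (Fin (k - 1) → V) → Wdn)
    (hwdn_span : Submodule.span ℝ (Set.range wdn) = ⊤)
    (hwdn_inner : ∀ u v : Fin (k - 1) → V,
      (⟪wdn u, wdn v⟫ : ℝ) = (Matrix.of fun i j => (⟪u i, v j⟫ : ℝ)).det)
    -- `V ⊗ ⋀^k V`
    (WT : Type*) [NormedAddCommGroup WT] [InnerProductSpace ℝ WT]
    (tens : V →ₗ[ℝ] Wk →ₗ[ℝ] WT)
    (htens_inner : ∀ (v w : V) (ω η : Wk),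
      (⟪tens v ω, tens w η⟫ : ℝ) = ⟪v, w⟫ * ⟪ω, η⟫)
    -- wedging `⋀^k V → ⋀^{k+1} V` and its adjoint, interior multiplication
    (lwedge : V →ₗ[ℝ] Wk →ₗ[ℝ] Wup)
    (hlwedge : ∀ (v : V) (u : Fin k → V), lwedge v (wk u) = wup (Fin.cons v u))
    (iota : V →ₗ[ℝ] Wup →ₗ[ℝ] Wk)
    (hiota : ∀ (v : V) (ζ : Wup) (ω : Wk), (⟪iota v ζ, ω⟫ : ℝ) = ⟪ζ, lwedge v ω⟫)
    -- wedging `⋀^{k-1} V → ⋀^k V` (for `k ≥ 1`)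
    (wedge' : V →ₗ[ℝ] Wdn →ₗ[ℝ] Wk)
    (hwedge' : ∀ (v : V) (u : Fin (k - 1) → V) (h : k - 1 + 1 = k),
      wedge' v (wdn u) = wk (Fin.cons v u ∘ Fin.cast h.symm))
    -- an orthonormal basis of `V`
    (e : Module.Basis (Fin n) ℝ V) (he : Orthonormal ℝ e) :
    (∀ ζ : Wup,
      ‖Real.sqrt (1 / ((k : ℝ) + 1)) • ∑ i, tens (e i) (iota (e i) ζ)‖ = ‖ζ‖) ∧
    (k ≠ 0 → ∀ η : Wdn,
      ‖Real.sqrt (1 / ((n : ℝ) - k + 1)) • ∑ i, tens (e i) (wedge' (e i) η)‖ = ‖η‖) ∧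
    (k ≠ 0 → ∀ (ζ : Wup) (η : Wdn),
      (⟪Real.sqrt (1 / ((k : ℝ) + 1)) • ∑ i, tens (e i) (iota (e i) ζ),
        Real.sqrt (1 / ((n : ℝ) - k + 1)) • ∑ i, tens (e i) (wedge' (e i) η)⟫ : ℝ) = 0) := by
  set b := e.toOrthonormalBasis he
  have hb : ⇑b = ⇑e := e.coe_toOrthonormalBasis he
  have hQ : ∀ f g : Fin n → Wk,
      ⟪∑ i, tens (e i) (f i), ∑ i, tens (e i) (g i)⟫ = ∑ i, ⟪f i, g i⟫ :=
    he.inner_sum_apply_sum_apply (fun v ω => tens v ω) htens_inner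
  refine ⟨fun ζ => ?_, fun hk0 η => ?_, fun hk0 ζ η => ?_⟩
  · refine norm_sqrt_one_div_smul_eq (by positivity) ?_
    rw [hQ, ← hb, b.sum_inner_iota_apply_iota_apply_eq_sum hwk_span hwk_inner hwup_span
      hwup_inner hlwedge hiota]
  · obtain ⟨m, rfl⟩ := Nat.exists_eq_succ_of_ne_zero hk0
    have hmn : (m : ℝ) + 1 ≤ n := by exact_mod_cast hk
    refine norm_sqrt_one_div_smul_eq (by push_cast; linarith) ?_
    rw [hQ, ← hb, b.sum_inner_wedge_apply_wedge_apply hwdn_span hwdn_inner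
      hwk_inner (fun v u => hwedge' v u rfl), Fintype.card_fin]
    push_cast
    ring
  · obtain ⟨m, rfl⟩ := Nat.exists_eq_succ_of_ne_zero hk0
    have hvanish := wedge_apply_wedge_apply_self hwdn_span hwup_inner
      (fun v u => hwedge' v u rfl) hlwedge
    simp [real_inner_smul_left, real_inner_smul_right, hQ, hiota, hvanish]

/-- Let `V` be an `n`-dimensional real inner product space with orthonormal basis
`e₁, …, e_n`, and `0 ≤ k ≤ n`.  The exterior powers `⋀^k V`, `⋀^{k+1} V`,
`⋀^{k-1} V` and the tensor product `V ⊗ ⋀^k V` are axiomatised by inner product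
spaces spanned by decomposables with the induced inner products
(Gram determinants, resp. `⟨v ⊗ ω, w ⊗ η⟩ = ⟨v, w⟩ ⟨ω, η⟩`); `iota` is interior
multiplication (the adjoint of wedging) and `wedge'` is wedging by a vector.
Then `Q₁(ζ) = (1/(k+1))^{1/2} ∑ᵢ eᵢ ⊗ ι(eᵢ)ζ` and
`Q₂(η) = (1/(n-k+1))^{1/2} ∑ᵢ eᵢ ⊗ (eᵢ ∧ η)` are norm-preserving (linear) maps
with orthogonal images. -/
theorem Q1_Q2_isometric_orthogonal
    {V : Type*} [NormedAddCommGroup V] [InnerProductSpace ℝ V]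
    (n k : ℕ) (hV : Module.finrank ℝ V = n) (hk : k ≤ n)
    -- `⋀^k V`
    (Wk : Type*) [NormedAddCommGroup Wk] [InnerProductSpace ℝ Wk]
    (wk : (Fin k → V) → Wk)
    (hwk_span : Submodule.span ℝ (Set.range wk) = ⊤)
    (hwk_inner : ∀ u v : Fin k → V,
      (⟪wk u, wk v⟫ : ℝ) = (Matrix.of fun i j => (⟪u i, v j⟫ : ℝ)).det)
    -- `⋀^{k+1} V`
    (Wup : Type*) [NormedAddCommGroup Wup] [InnerProductSpace ℝ Wup]
    (wup : (Fin (k + 1) → V) → Wup)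
    (hwup_span : Submodule.span ℝ (Set.range wup) = ⊤)
    (hwup_inner : ∀ u v : Fin (k + 1) → V,
      (⟪wup u, wup v⟫ : ℝ) = (Matrix.of fun i j => (⟪u i, v j⟫ : ℝ)).det)
    -- `⋀^{k-1} V`
    (Wdn : Type*) [NormedAddCommGroup Wdn] [InnerProductSpace ℝ Wdn]
    (wdn : (Fin (k - 1) → V) → Wdn)
    (hwdn_span : Submodule.span ℝ (Set.range wdn) = ⊤)
    (hwdn_inner : ∀ u v : Fin (k - 1) → V,
      (⟪wdn u, wdn v⟫ : ℝ) = (Matrix.of fun i j => (⟪u i, v j⟫ : ℝ)).det)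
    -- `V ⊗ ⋀^k V`
    (WT : Type*) [NormedAddCommGroup WT] [InnerProductSpace ℝ WT]
    (tens : V →ₗ[ℝ] Wk →ₗ[ℝ] WT)
    (htens_span : Submodule.span ℝ {x : WT | ∃ (v : V) (ω : Wk), tens v ω = x} = ⊤)
    (htens_inner : ∀ (v w : V) (ω η : Wk),
      (⟪tens v ω, tens w η⟫ : ℝ) = ⟪v, w⟫ * ⟪ω, η⟫)
    -- wedging `⋀^k V → ⋀^{k+1} V` and its adjoint, interior multiplication
    (lwedge : V →ₗ[ℝ] Wk →ₗ[ℝ] Wup)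
    (hlwedge : ∀ (v : V) (u : Fin k → V), lwedge v (wk u) = wup (Fin.cons v u))
    (iota : V →ₗ[ℝ] Wup →ₗ[ℝ] Wk)
    (hiota : ∀ (v : V) (ζ : Wup) (ω : Wk), (⟪iota v ζ, ω⟫ : ℝ) = ⟪ζ, lwedge v ω⟫)
    -- wedging `⋀^{k-1} V → ⋀^k V` (for `k ≥ 1`)
    (wedge' : V →ₗ[ℝ] Wdn →ₗ[ℝ] Wk)
    (hwedge' : ∀ (v : V) (u : Fin (k - 1) → V) (h : k - 1 + 1 = k),
      wedge' v (wdn u) = wk (Fin.cons v u ∘ Fin.cast h.symm))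
    -- an orthonormal basis of `V`
    (e : Module.Basis (Fin n) ℝ V) (he : Orthonormal ℝ e) :
    (∀ ζ : Wup,
      ‖Real.sqrt (1 / ((k : ℝ) + 1)) • ∑ i, tens (e i) (iota (e i) ζ)‖ = ‖ζ‖) ∧
    (k ≠ 0 → ∀ η : Wdn,
      ‖Real.sqrt (1 / ((n : ℝ) - k + 1)) • ∑ i, tens (e i) (wedge' (e i) η)‖ = ‖η‖) ∧
    (k ≠ 0 → ∀ (ζ : Wup) (η : Wdn),
      (⟪Real.sqrt (1 / ((k : ℝ) + 1)) • ∑ i, tens (e i) (iota (e i) ζ),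
        Real.sqrt (1 / ((n : ℝ) - k + 1)) • ∑ i, tens (e i) (wedge' (e i) η)⟫ : ℝ) = 0) :=
  Q1_Q2_isometric_orthogonal_general n k hk Wk wk hwk_span hwk_inner Wup wup hwup_span hwup_inner
    Wdn wdn hwdn_span hwdn_inner WT tens htens_inner lwedge hlwedge iota hiota wedge' hwedge' e he
end

section
/- Let V be an n-dimensional real inner product space, 0 ≤ k ≤ n, and define P₁ : V ⊗ ⋀^k V → ⋀^{k+1} V by P₁(α ⊗ ω) = (1/(k+1))^{1/2} α ∧ ω and Q₁ : ⋀^{k+1} V → V ⊗ ⋀^k V by Q₁(ζ) = (1/(k+1))^{1/2} Σᵢ eᵢ ⊗ ι(eᵢ)ζ for an orthonormal basis (eᵢ). Then P₁ ∘ Q₁ = Id on ⋀^{k+1} V, and Q₁ ∘ P₁ is the orthogonal projection of V ⊗ ⋀^k V onto the image of Q₁. -/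
/-!
Expanding `ι(v) (u₀ ∧ ⋯ ∧ u_k)` by the Laplace expansion of the Gram determinant along its
first column gives `∑ⱼ (-1)ʲ ⟪uⱼ, v⟫ u₀ ∧ ⋯ ûⱼ ⋯ ∧ u_k`. Summing `eᵢ ∧ ι(eᵢ)ζ` over an orthonormal
basis, each term reassembles `uⱼ ∧ u₀ ∧ ⋯ ûⱼ ⋯ ∧ u_k = (-1)ʲ ζ`, so `∑ᵢ eᵢ ∧ ι(eᵢ)ζ = (k+1) ζ` and
`P₁ Q₁ = Id`. Since `ι(v)` is adjoint to `v ∧ ·`, `Q₁` is the adjoint of `P₁`; a right inverse of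
`P₁` that is also its adjoint makes `Q₁ P₁` the orthogonal projection onto the image of `Q₁`.
-/

open RealInnerProductSpace

theorem ext_inner_right_of_span_eq_top {𝕜 E ι : Type*} [RCLike 𝕜] [NormedAddCommGroup E]
    [InnerProductSpace 𝕜 E] {v : ι → E} (hv : Submodule.span 𝕜 (Set.range v) = ⊤) {x y : E}
    (h : ∀ i, inner 𝕜 x (v i) = inner 𝕜 y (v i)) : x = y :=
  ext_inner_right 𝕜 fun w => LinearMap.congr_fun
    (LinearMap.ext_on_range (f := innerₛₗ 𝕜 x) (g := innerₛₗ 𝕜 y) hv h) w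

theorem inner_eq_inner_apply_of_span_eq_top {𝕜 E F : Type*} [RCLike 𝕜]
    [NormedAddCommGroup E] [InnerProductSpace 𝕜 E] [NormedAddCommGroup F] [InnerProductSpace 𝕜 F]
    {S : Set E} (hS : Submodule.span 𝕜 S = ⊤) (A : E →ₗ[𝕜] F) (B : F → E)
    (h : ∀ x ∈ S, ∀ y, inner 𝕜 x (B y) = inner 𝕜 (A x) y) (x : E) (y : F) :
    inner 𝕜 x (B y) = inner 𝕜 (A x) y := by
  have hx : x ∈ Submodule.span 𝕜 S := hS ▸ Submodule.mem_top
  induction hx using Submodule.span_induction with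
  | mem x hx => exact h x hx y
  | zero => simp
  | add a b _ _ ha hb => rw [inner_add_left, ha, hb, map_add, inner_add_left]
  | smul r a _ ha => rw [inner_smul_left, ha, map_smul, inner_smul_left]

theorem OrthonormalBasis.sum_inner_smul_apply {ι 𝕜 E M : Type*} [Fintype ι] [RCLike 𝕜]
    [NormedAddCommGroup E] [InnerProductSpace 𝕜 E] [AddCommGroup M] [Module 𝕜 M]
    (b : OrthonormalBasis ι 𝕜 E) (f : E →ₗ[𝕜] M) (x : E) :
    ∑ i, inner 𝕜 (b i) x • f (b i) = f x := by
  simp_rw [← map_smul, ← map_sum, b.sum_repr']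

theorem Function.LeftInverse.inner_sub_apply_apply_eq_zero {𝕜 E F : Type*} [RCLike 𝕜]
    [NormedAddCommGroup E] [InnerProductSpace 𝕜 E] [NormedAddCommGroup F] [InnerProductSpace 𝕜 F]
    {P : E → F} {Q : F → E} (hPQ : Function.LeftInverse P Q)
    (hadj : ∀ x y, inner 𝕜 x (Q y) = inner 𝕜 (P x) y) (x : E) (y : F) :
    inner 𝕜 (x - Q (P x)) (Q y) = 0 := by
  rw [inner_sub_left, hadj, hadj, hPQ, sub_self]

section GramDeterminant

variable {V W : Type*} [NormedAddCommGroup V] [InnerProductSpace ℝ V]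
  [NormedAddCommGroup W] [InnerProductSpace ℝ W] {m : ℕ} {w : (Fin m → V) → W}

theorem apply_comp_perm_of_inner_eq_det (hw_span : Submodule.span ℝ (Set.range w) = ⊤)
    (hw_inner : ∀ u v : Fin m → V, ⟪w u, w v⟫ = (Matrix.of fun i j => ⟪u i, v j⟫).det)
    (u : Fin m → V) (σ : Equiv.Perm (Fin m)) :
    w (u ∘ σ) = (Equiv.Perm.sign σ : ℝ) • w u := by
  refine ext_inner_right_of_span_eq_top hw_span fun v => ?_
  rw [real_inner_smul_left, hw_inner, hw_inner, ← Matrix.det_permute]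
  rfl

theorem apply_cons_removeNth_of_inner_eq_det {w : (Fin (m + 1) → V) → W}
    (hw_span : Submodule.span ℝ (Set.range w) = ⊤)
    (hw_inner : ∀ u v : Fin (m + 1) → V, ⟪w u, w v⟫ = (Matrix.of fun i j => ⟪u i, v j⟫).det)
    (u : Fin (m + 1) → V) (j : Fin (m + 1)) :
    w (Fin.cons (u j) (j.removeNth u)) = ((-1 : ℝ) ^ (j : ℕ)) • w u := by
  rw [Fin.cons_removeNth_eq_comp_cycleRange_symm, ← Equiv.Perm.inv_def,
    apply_comp_perm_of_inner_eq_det hw_span hw_inner, Equiv.Perm.sign_inv, Fin.sign_cycleRange]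
  push_cast
  rfl

end GramDeterminant

section InteriorProduct

variable {V Wk Wup WT : Type*} [NormedAddCommGroup V] [InnerProductSpace ℝ V]
  [NormedAddCommGroup Wk] [InnerProductSpace ℝ Wk]
  [NormedAddCommGroup Wup] [InnerProductSpace ℝ Wup]
  [NormedAddCommGroup WT] [InnerProductSpace ℝ WT]
  {k : ℕ} {wk : (Fin k → V) → Wk} {wup : (Fin (k + 1) → V) → Wup}
  {lwedge : V →ₗ[ℝ] Wk →ₗ[ℝ] Wup} {iota : V →ₗ[ℝ] Wup →ₗ[ℝ] Wk}

theorem iota_wup_eq_sum (hwk_span : Submodule.span ℝ (Set.range wk) = ⊤)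
    (hwk_inner : ∀ u v : Fin k → V, ⟪wk u, wk v⟫ = (Matrix.of fun i j => ⟪u i, v j⟫).det)
    (hwup_inner : ∀ u v : Fin (k + 1) → V,
      ⟪wup u, wup v⟫ = (Matrix.of fun i j => ⟪u i, v j⟫).det)
    (hlwedge : ∀ (v : V) (u : Fin k → V), lwedge v (wk u) = wup (Fin.cons v u))
    (hiota : ∀ (v : V) (ζ : Wup) (ω : Wk), ⟪iota v ζ, ω⟫ = ⟪ζ, lwedge v ω⟫)
    (v : V) (u : Fin (k + 1) → V) :
    iota v (wup u) = ∑ j : Fin (k + 1), ((-1) ^ (j : ℕ) * ⟪u j, v⟫) • wk (j.removeNth u) := by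
  refine ext_inner_right_of_span_eq_top hwk_span fun ω => ?_
  rw [hiota, hlwedge, hwup_inner, Matrix.det_succ_column_zero, sum_inner]
  refine Finset.sum_congr rfl fun j _ => ?_
  rw [real_inner_smul_left, hwk_inner]
  rfl

theorem sum_lwedge_iota {ι : Type*} [Fintype ι] (b : OrthonormalBasis ι ℝ V)
    (hwk_span : Submodule.span ℝ (Set.range wk) = ⊤)
    (hwk_inner : ∀ u v : Fin k → V, ⟪wk u, wk v⟫ = (Matrix.of fun i j => ⟪u i, v j⟫).det)
    (hwup_span : Submodule.span ℝ (Set.range wup) = ⊤)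
    (hwup_inner : ∀ u v : Fin (k + 1) → V,
      ⟪wup u, wup v⟫ = (Matrix.of fun i j => ⟪u i, v j⟫).det)
    (hlwedge : ∀ (v : V) (u : Fin k → V), lwedge v (wk u) = wup (Fin.cons v u))
    (hiota : ∀ (v : V) (ζ : Wup) (ω : Wk), ⟪iota v ζ, ω⟫ = ⟪ζ, lwedge v ω⟫) (ζ : Wup) :
    ∑ i, lwedge (b i) (iota (b i) ζ) = ((k : ℝ) + 1) • ζ := by
  suffices h : ∑ i, lwedge (b i) ∘ₗ iota (b i) = ((k : ℝ) + 1) • LinearMap.id by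
    simpa using LinearMap.congr_fun h ζ
  refine LinearMap.ext_on_range hwup_span fun u => ?_
  calc (∑ i, lwedge (b i) ∘ₗ iota (b i)) (wup u)
      = ∑ j : Fin (k + 1), (-1 : ℝ) ^ (j : ℕ) •
          ∑ i, ⟪b i, u j⟫ • lwedge.flip (wk (j.removeNth u)) (b i) := by
        simp only [LinearMap.sum_apply, LinearMap.comp_apply, LinearMap.flip_apply,
          iota_wup_eq_sum hwk_span hwk_inner hwup_inner hlwedge hiota, map_sum, map_smul,
          Finset.smul_sum, smul_smul, real_inner_comm (u _)]
        exact Finset.sum_comm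
    _ = ∑ _j : Fin (k + 1), wup u := by
        refine Finset.sum_congr rfl fun j _ => ?_
        rw [b.sum_inner_smul_apply, LinearMap.flip_apply, hlwedge,
          apply_cons_removeNth_of_inner_eq_det hwup_span hwup_inner, smul_smul, ← mul_pow]
        norm_num
    _ = (((k : ℝ) + 1) • LinearMap.id : Wup →ₗ[ℝ] Wup) (wup u) := by
        simp [Finset.sum_const, ← Nat.cast_smul_eq_nsmul ℝ]

theorem apply_smul_sum_tens_iota {ι : Type*} [Fintype ι] (b : OrthonormalBasis ι ℝ V)
    (hwk_span : Submodule.span ℝ (Set.range wk) = ⊤)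
    (hwk_inner : ∀ u v : Fin k → V, ⟪wk u, wk v⟫ = (Matrix.of fun i j => ⟪u i, v j⟫).det)
    (hwup_span : Submodule.span ℝ (Set.range wup) = ⊤)
    (hwup_inner : ∀ u v : Fin (k + 1) → V,
      ⟪wup u, wup v⟫ = (Matrix.of fun i j => ⟪u i, v j⟫).det)
    (hlwedge : ∀ (v : V) (u : Fin k → V), lwedge v (wk u) = wup (Fin.cons v u))
    (hiota : ∀ (v : V) (ζ : Wup) (ω : Wk), ⟪iota v ζ, ω⟫ = ⟪ζ, lwedge v ω⟫)
    {tens : V →ₗ[ℝ] Wk →ₗ[ℝ] WT} {P1 : WT →ₗ[ℝ] Wup} {c : ℝ}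
    (hP1 : ∀ (v : V) (ω : Wk), P1 (tens v ω) = c • lwedge v ω) (ζ : Wup) :
    P1 (c • ∑ i, tens (b i) (iota (b i) ζ)) = (c * c * ((k : ℝ) + 1)) • ζ := by
  simp only [map_smul, map_sum, hP1, ← Finset.smul_sum,
    sum_lwedge_iota b hwk_span hwk_inner hwup_span hwup_inner hlwedge hiota, smul_smul, mul_assoc]

theorem inner_smul_sum_tens_iota {ι : Type*} [Fintype ι] (b : OrthonormalBasis ι ℝ V)
    {tens : V →ₗ[ℝ] Wk →ₗ[ℝ] WT}
    (htens_span : Submodule.span ℝ {x : WT | ∃ (v : V) (ω : Wk), tens v ω = x} = ⊤)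
    (htens_inner : ∀ (v w : V) (ω η : Wk), ⟪tens v ω, tens w η⟫ = ⟪v, w⟫ * ⟪ω, η⟫)
    (hiota : ∀ (v : V) (ζ : Wup) (ω : Wk), ⟪iota v ζ, ω⟫ = ⟪ζ, lwedge v ω⟫)
    {P1 : WT →ₗ[ℝ] Wup} {c : ℝ}
    (hP1 : ∀ (v : V) (ω : Wk), P1 (tens v ω) = c • lwedge v ω) (x : WT) (ζ : Wup) :
    ⟪x, c • ∑ i, tens (b i) (iota (b i) ζ)⟫ = ⟪P1 x, ζ⟫ := by
  refine inner_eq_inner_apply_of_span_eq_top htens_span P1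
    (fun ζ => c • ∑ i, tens (b i) (iota (b i) ζ)) ?_ x ζ
  rintro _ ⟨v, ω, rfl⟩ ζ
  calc ⟪tens v ω, c • ∑ i, tens (b i) (iota (b i) ζ)⟫
      = c * ∑ i, ⟪b i, v⟫ • (innerₗ Wup ζ ∘ₗ lwedge.flip ω) (b i) := by
        simp only [real_inner_smul_right, inner_sum, htens_inner, real_inner_comm (iota _ ζ),
          hiota, real_inner_comm v, LinearMap.comp_apply, LinearMap.flip_apply,
          innerₗ_apply_apply, smul_eq_mul]
    _ = ⟪P1 (tens v ω), ζ⟫ := by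
        rw [b.sum_inner_smul_apply, hP1, real_inner_smul_left, LinearMap.comp_apply,
          LinearMap.flip_apply, innerₗ_apply_apply, real_inner_comm]

end InteriorProduct

theorem P1_comp_Q1_and_orthogonal_projection_general
    {V : Type*} [NormedAddCommGroup V] [InnerProductSpace ℝ V]
    (n k : ℕ)
    -- `⋀^k V`
    (Wk : Type*) [NormedAddCommGroup Wk] [InnerProductSpace ℝ Wk]
    (wk : (Fin k → V) → Wk)
    (hwk_span : Submodule.span ℝ (Set.range wk) = ⊤)
    (hwk_inner : ∀ u v : Fin k → V,
      (⟪wk u, wk v⟫ : ℝ) = (Matrix.of fun i j => (⟪u i, v j⟫ : ℝ)).det)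
    -- `⋀^{k+1} V`
    (Wup : Type*) [NormedAddCommGroup Wup] [InnerProductSpace ℝ Wup]
    (wup : (Fin (k + 1) → V) → Wup)
    (hwup_span : Submodule.span ℝ (Set.range wup) = ⊤)
    (hwup_inner : ∀ u v : Fin (k + 1) → V,
      (⟪wup u, wup v⟫ : ℝ) = (Matrix.of fun i j => (⟪u i, v j⟫ : ℝ)).det)
    -- `V ⊗ ⋀^k V`
    (WT : Type*) [NormedAddCommGroup WT] [InnerProductSpace ℝ WT]
    (tens : V →ₗ[ℝ] Wk →ₗ[ℝ] WT)
    (htens_span : Submodule.span ℝ {x : WT | ∃ (v : V) (ω : Wk), tens v ω = x} = ⊤)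
    (htens_inner : ∀ (v w : V) (ω η : Wk),
      (⟪tens v ω, tens w η⟫ : ℝ) = ⟪v, w⟫ * ⟪ω, η⟫)
    -- wedging and its adjoint, interior multiplication
    (lwedge : V →ₗ[ℝ] Wk →ₗ[ℝ] Wup)
    (hlwedge : ∀ (v : V) (u : Fin k → V), lwedge v (wk u) = wup (Fin.cons v u))
    (iota : V →ₗ[ℝ] Wup →ₗ[ℝ] Wk)
    (hiota : ∀ (v : V) (ζ : Wup) (ω : Wk), (⟪iota v ζ, ω⟫ : ℝ) = ⟪ζ, lwedge v ω⟫)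
    -- `P₁ : V ⊗ ⋀^k V → ⋀^{k+1} V`
    (P1 : WT →ₗ[ℝ] Wup)
    (hP1 : ∀ (v : V) (ω : Wk),
      P1 (tens v ω) = Real.sqrt (1 / ((k : ℝ) + 1)) • lwedge v ω)
    -- an orthonormal basis of `V`
    (e : Module.Basis (Fin n) ℝ V) (he : Orthonormal ℝ e) :
    (∀ ζ : Wup,
      P1 (Real.sqrt (1 / ((k : ℝ) + 1)) • ∑ i, tens (e i) (iota (e i) ζ)) = ζ) ∧
    (∀ (x : WT) (ζ : Wup),
      (⟪x - Real.sqrt (1 / ((k : ℝ) + 1)) • ∑ i, tens (e i) (iota (e i) (P1 x)),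
        Real.sqrt (1 / ((k : ℝ) + 1)) • ∑ i, tens (e i) (iota (e i) ζ)⟫ : ℝ) = 0) := by
  set c := Real.sqrt (1 / ((k : ℝ) + 1))
  have hc : c * c * ((k : ℝ) + 1) = 1 := by
    rw [Real.mul_self_sqrt (by positivity)]
    field_simp
  rw [← e.coe_toOrthonormalBasis he]
  set b := e.toOrthonormalBasis he
  have hPQ : Function.LeftInverse P1 fun ζ => c • ∑ i, tens (b i) (iota (b i) ζ) := fun ζ => by
    rw [apply_smul_sum_tens_iota b hwk_span hwk_inner hwup_span hwup_inner hlwedge hiota hP1,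
      hc, one_smul]
  exact ⟨hPQ, hPQ.inner_sub_apply_apply_eq_zero
    (inner_smul_sum_tens_iota b htens_span htens_inner hiota hP1)⟩

/-- Let `V` be an `n`-dimensional real inner product space, `0 ≤ k ≤ n`.  With
`⋀^k V`, `⋀^{k+1} V` and `V ⊗ ⋀^k V` axiomatised as inner product spaces spanned
by decomposables with the induced inner products, let
`P₁(v ⊗ ω) = (1/(k+1))^{1/2} v ∧ ω` and
`Q₁(ζ) = (1/(k+1))^{1/2} ∑ᵢ eᵢ ⊗ ι(eᵢ)ζ` (for an orthonormal basis `(eᵢ)`, with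
`ι` interior multiplication, the adjoint of wedging).  Then `P₁ ∘ Q₁ = Id` on
`⋀^{k+1} V`, and `Q₁ ∘ P₁` is the orthogonal projection of `V ⊗ ⋀^k V` onto the
image of `Q₁` (i.e. `x - Q₁(P₁ x)` is orthogonal to the image of `Q₁`). -/
theorem P1_comp_Q1_and_orthogonal_projection
    {V : Type*} [NormedAddCommGroup V] [InnerProductSpace ℝ V]
    (n k : ℕ) (hV : Module.finrank ℝ V = n) (hk : k ≤ n)
    -- `⋀^k V`
    (Wk : Type*) [NormedAddCommGroup Wk] [InnerProductSpace ℝ Wk]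
    (wk : (Fin k → V) → Wk)
    (hwk_span : Submodule.span ℝ (Set.range wk) = ⊤)
    (hwk_inner : ∀ u v : Fin k → V,
      (⟪wk u, wk v⟫ : ℝ) = (Matrix.of fun i j => (⟪u i, v j⟫ : ℝ)).det)
    -- `⋀^{k+1} V`
    (Wup : Type*) [NormedAddCommGroup Wup] [InnerProductSpace ℝ Wup]
    (wup : (Fin (k + 1) → V) → Wup)
    (hwup_span : Submodule.span ℝ (Set.range wup) = ⊤)
    (hwup_inner : ∀ u v : Fin (k + 1) → V,
      (⟪wup u, wup v⟫ : ℝ) = (Matrix.of fun i j => (⟪u i, v j⟫ : ℝ)).det)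
    -- `V ⊗ ⋀^k V`
    (WT : Type*) [NormedAddCommGroup WT] [InnerProductSpace ℝ WT]
    (tens : V →ₗ[ℝ] Wk →ₗ[ℝ] WT)
    (htens_span : Submodule.span ℝ {x : WT | ∃ (v : V) (ω : Wk), tens v ω = x} = ⊤)
    (htens_inner : ∀ (v w : V) (ω η : Wk),
      (⟪tens v ω, tens w η⟫ : ℝ) = ⟪v, w⟫ * ⟪ω, η⟫)
    -- wedging and its adjoint, interior multiplication
    (lwedge : V →ₗ[ℝ] Wk →ₗ[ℝ] Wup)
    (hlwedge : ∀ (v : V) (u : Fin k → V), lwedge v (wk u) = wup (Fin.cons v u))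
    (iota : V →ₗ[ℝ] Wup →ₗ[ℝ] Wk)
    (hiota : ∀ (v : V) (ζ : Wup) (ω : Wk), (⟪iota v ζ, ω⟫ : ℝ) = ⟪ζ, lwedge v ω⟫)
    -- `P₁ : V ⊗ ⋀^k V → ⋀^{k+1} V`
    (P1 : WT →ₗ[ℝ] Wup)
    (hP1 : ∀ (v : V) (ω : Wk),
      P1 (tens v ω) = Real.sqrt (1 / ((k : ℝ) + 1)) • lwedge v ω)
    -- an orthonormal basis of `V`
    (e : Module.Basis (Fin n) ℝ V) (he : Orthonormal ℝ e) :
    (∀ ζ : Wup,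
      P1 (Real.sqrt (1 / ((k : ℝ) + 1)) • ∑ i, tens (e i) (iota (e i) ζ)) = ζ) ∧
    (∀ (x : WT) (ζ : Wup),
      (⟪x - Real.sqrt (1 / ((k : ℝ) + 1)) • ∑ i, tens (e i) (iota (e i) (P1 x)),
        Real.sqrt (1 / ((k : ℝ) + 1)) • ∑ i, tens (e i) (iota (e i) ζ)⟫ : ℝ) = 0) :=
  P1_comp_Q1_and_orthogonal_projection_general n k Wk wk hwk_span hwk_inner Wup wup hwup_span
    hwup_inner WT tens htens_span htens_inner lwedge hlwedge iota hiota P1 hP1 e he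
end

section
/- Let (M, g) be a Riemannian manifold, X a vector field, ω a p-form (p ≥ 1), and (e₁,…,e_n) a local orthonormal frame. Then Σ_{i=1}^{n} ι(e_i)(R(X, e_i)ω) = -∇_X(d*ω) + d*(∇_X ω) + Σ_{i,j=1}^{n} ⟨∇_{e_j} X, e_i⟩ ι(e_j)(∇_{e_i} ω), where R(X, e_i)ω = ∇_X ∇_{e_i} ω - ∇_{e_i} ∇_X ω - ∇_{[X, e_i]} ω is the curvature operator acting on forms and d*ω = -Σᵢ ι(e_i)∇_{e_i}ω is the codifferential. -/
/- An algebraic (Koszul-style) model of a Riemannian manifold: the commutative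
`ℝ`-algebra `A` plays the role of the ring of smooth functions, derivations of
`A` play the role of vector fields, `g` is the Riemannian metric, `nab` the
Levi-Civita connection (`A`-linear in the first slot, a derivation in the
second, metric and torsion-free), `e` a (local) orthonormal frame, and
`k`-forms are alternating `A`-multilinear functions
`(Fin k → Derivation ℝ A A) → A`. -/

namespace RiemannModel

variable {A : Type*} [CommRing A] [Algebra ℝ A]

abbrev Forms (A : Type*) [CommRing A] [Algebra ℝ A] (k : ℕ) : Type _ :=
  (Fin k → Derivation ℝ A A) → A

variable (nab : Derivation ℝ A A → Derivation ℝ A A → Derivation ℝ A A)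
variable (g : Derivation ℝ A A → Derivation ℝ A A → A)
variable {n : ℕ} (e : Fin n → Derivation ℝ A A)

/-- covariant derivative of a `k`-form -/
def covD {k : ℕ} (Y : Derivation ℝ A A) (ω : Forms A k) : Forms A k :=
  fun Z => Y (ω Z) - ∑ i, ω (Function.update Z i (nab Y (Z i)))

/-- interior multiplication of a `(k+1)`-form with a vector field -/
def contr {k : ℕ} (X : Derivation ℝ A A) (ω : Forms A (k + 1)) : Forms A k :=
  fun Z => ω (Fin.cons X Z)

/-- exterior derivative (via the torsion-free connection `nab`) -/
def extd {k : ℕ} (ω : Forms A k) : Forms A (k + 1) :=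
  fun Z => ∑ i : Fin (k + 1), (-1 : A) ^ (i : ℕ) * covD nab (Z i) ω (Z ∘ i.succAbove)

/-- codifferential `d*ω = -∑ᵢ ι(eᵢ)∇_{eᵢ}ω` on `(k+1)`-forms -/
def codiffS {k : ℕ} (ω : Forms A (k + 1)) : Forms A k :=
  -(∑ i, contr (e i) (covD nab (e i) ω))

/-- curvature operator on forms -/
def Rform {k : ℕ} (X Y : Derivation ℝ A A) (ω : Forms A k) : Forms A k :=
  covD nab X (covD nab Y ω) - covD nab Y (covD nab X ω) - covD nab ⁅X, Y⁆ ω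

/-- curvature operator on vector fields -/
def Rvec (X Y Z : Derivation ℝ A A) : Derivation ℝ A A :=
  nab X (nab Y Z) - nab Y (nab X Z) - nab ⁅X, Y⁆ Z

/-- the Ricci endomorphism `Ric(X) = ∑ᵢ R(X, eᵢ)eᵢ` -/
def ricci (X : Derivation ℝ A A) : Derivation ℝ A A :=
  ∑ i, Rvec nab X (e i) (e i)

/-- the metric dual `1`-form of a vector field -/
def flat (X : Derivation ℝ A A) : Forms A 1 := fun Z => g X (Z 0)

/-- wedge product of a `1`-form with a `k`-form -/
def wedge1 {k : ℕ} (α : Forms A 1) (ω : Forms A k) : Forms A (k + 1) :=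
  fun Z => ∑ i : Fin (k + 1), (-1 : A) ^ (i : ℕ) * α (fun _ => Z i) * ω (Z ∘ i.succAbove)

/-- gradient -/
def grad (f : A) : Derivation ℝ A A := ∑ i, (e i) f • e i

/-- Laplacian on functions, `Δ f = -tr Hess f` -/
def lapl (f : A) : A := -(∑ i, ((e i) ((e i) f) - (nab (e i) (e i)) f))

/-- musical isomorphism: vector field associated to a `1`-form -/
def sharp (α : Forms A 1) : Derivation ℝ A A := ∑ i, α (fun _ => e i) • e i

/-- pointwise inner product of `k`-forms -/
noncomputable def finner {k : ℕ} (ω η : Forms A k) : A :=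
  algebraMap ℝ A (1 / (Nat.factorial k : ℝ)) *
    ∑ z : Fin k → Fin n, ω (fun a => e (z a)) * η (fun a => e (z a))

/-- auxiliary: `Y♭ ∧ d*η` (zero on `0`-forms, where `d* = 0`) -/
def wedgeCod : ∀ {k : ℕ}, Forms A k → Derivation ℝ A A → Forms A k
  | 0, _, _ => 0
  | _ + 1, η, Y => wedge1 (flat g Y) (codiffS nab e η)

/-- the `T^{k,1}`-component of the covariant derivative of a `k`-form:
`T(η)(Y) = ∇_Y η - (1/(k+1)) ι(Y)(dη) + (1/(n-k+1)) Y♭ ∧ d*η` -/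
noncomputable def Tform {k : ℕ} (η : Forms A k) (Y : Derivation ℝ A A) : Forms A k :=
  covD nab Y η - algebraMap ℝ A (1 / ((k : ℝ) + 1)) • contr Y (extd nab η) +
    algebraMap ℝ A (1 / ((n : ℝ) - k + 1)) • wedgeCod nab g e η Y

/-- Hodge Laplacian `Δ = d d* + d* d` -/
def hodgeLap : ∀ {k : ℕ}, Forms A k → Forms A k
  | 0, ω => codiffS nab e (extd nab ω)
  | _ + 1, ω => codiffS nab e (extd nab ω) + extd nab (codiffS nab e ω)

/-- the Weitzenböck curvature operator `ℛ_k` -/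
def Rcal : ∀ {k : ℕ}, Forms A k → Forms A k
  | 0, _ => 0
  | _ + 1, η =>
    -(∑ i, ∑ j, wedge1 (flat g (e i)) (contr (e j) (Rform nab (e i) (e j) η)))


variable {k : ℕ}

theorem covD_neg (X : Derivation ℝ A A) (η : Forms A k) :
    covD nab X (-η) = -covD nab X η := by
  funext Z
  simp only [covD, Pi.neg_apply, map_neg, Finset.sum_neg_distrib]
  ring

theorem covD_sum {ι : Type*} (s : Finset ι) (X : Derivation ℝ A A) (η : ι → Forms A k) :
    covD nab X (∑ i ∈ s, η i) = ∑ i ∈ s, covD nab X (η i) := by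
  funext Z
  simp only [covD, Finset.sum_apply, map_sum, Finset.sum_sub_distrib]
  rw [Finset.sum_comm]

theorem contr_sum {ι : Type*} (s : Finset ι) (Y : Derivation ℝ A A) (η : ι → Forms A (k + 1)) :
    contr Y (∑ i ∈ s, η i) = ∑ i ∈ s, contr Y (η i) := by
  funext Z
  simp only [contr, Finset.sum_apply]

theorem contr_covD (X Y : Derivation ℝ A A) (η : Forms A (k + 1)) :
    contr Y (covD nab X η) = covD nab X (contr Y η) - contr (nab X Y) η := by
  funext Z
  simp only [contr, covD, Pi.sub_apply, Fin.sum_univ_succ, Fin.cons_zero, Fin.cons_succ,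
    Fin.update_cons_zero, ← Fin.cons_update]
  ring

theorem covD_apply_update (Y : Derivation ℝ A A) (ω : Forms A k) (Z : Fin k → Derivation ℝ A A)
    (i : Fin k) (x : Derivation ℝ A A) :
    covD nab Y ω (Function.update Z i x) =
      Y (ω (Function.update Z i x)) - ω (Function.update Z i (nab Y x)) -
        ∑ l ∈ Finset.univ.erase i,
          ω (Function.update (Function.update Z l (nab Y (Z l))) i x) := by
  rw [covD, ← Finset.add_sum_erase _ _ (Finset.mem_univ i), Function.update_idem,
    Function.update_self, sub_add_eq_sub_sub]
  congr 1
  refine Finset.sum_congr rfl fun l hl => ?_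
  have hli : l ≠ i := Finset.ne_of_mem_erase hl
  rw [Function.update_of_ne hli, Function.update_comm hli]

def IsSlotLinear (ω : Forms A k) : Prop :=
  ∀ (Z : Fin k → Derivation ℝ A A) (i : Fin k), IsLinearMap A fun x => ω (Function.update Z i x)

theorem IsSlotLinear.isLinearMap_contr {η : Forms A (k + 1)} (hη : IsSlotLinear η) :
    IsLinearMap A fun Y => contr Y η := by
  constructor
  · intro x y
    funext Z
    simpa [contr, Fin.update_cons_zero] using (hη (Fin.cons x Z) 0).map_add x y
  · intro a x
    funext Z
    simpa [contr, Fin.update_cons_zero] using (hη (Fin.cons x Z) 0).map_smul a x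

theorem isLinearMap_covD (hnab : ∀ Z, IsLinearMap A (nab · Z)) {ω : Forms A k}
    (hω : IsSlotLinear ω) : IsLinearMap A fun Y => covD nab Y ω := by
  constructor
  · intro Y Y'
    funext Z
    simp only [covD, Pi.add_apply, (hnab _).map_add, (hω _ _).map_add, Derivation.coe_add,
      Finset.sum_add_distrib]
    ring
  · intro a Y
    funext Z
    simp only [covD, Pi.smul_apply, (hnab _).map_smul, (hω _ _).map_smul, Derivation.coe_smul,
      smul_eq_mul, mul_sub, Finset.mul_sum]

/-- The Leibniz rule of `∇` in the second slot cancels the derivative of the coefficient. -/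
theorem IsSlotLinear.covD
    (hnab_add₂ : ∀ X Y Z : Derivation ℝ A A, nab X (Y + Z) = nab X Y + nab X Z)
    (hnab_leibniz : ∀ (a : A) (X Y : Derivation ℝ A A), nab X (a • Y) = X a • Y + a • nab X Y)
    {ω : Forms A k} (hω : IsSlotLinear ω) (Y : Derivation ℝ A A) :
    IsSlotLinear (covD nab Y ω) := by
  intro Z i
  constructor
  · intro x y
    simp only [covD_apply_update, hnab_add₂, (hω _ i).map_add, map_add, Finset.sum_add_distrib]
    ring
  · intro a x
    simp only [covD_apply_update, hnab_leibniz, (hω _ i).map_add, (hω _ i).map_smul,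
      smul_eq_mul, Derivation.leibniz]
    rw [← Finset.mul_sum]
    ring

theorem contr_Rform_self (hnab_torsion : ∀ X Y : Derivation ℝ A A, nab X Y - nab Y X = ⁅X, Y⁆)
    {ω : Forms A (k + 1)} (hcov : IsLinearMap A fun Y => covD nab Y ω) (X Y : Derivation ℝ A A) :
    contr Y (Rform nab X Y ω) =
      covD nab X (contr Y (covD nab Y ω)) - contr Y (covD nab Y (covD nab X ω)) +
        contr Y (covD nab (nab Y X) ω) -
          (contr (nab X Y) (covD nab Y ω) + contr Y (covD nab (nab X Y) ω)) := by
  have htorsion : covD nab ⁅X, Y⁆ ω = covD nab (nab X Y) ω - covD nab (nab Y X) ω := by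
    rw [← hnab_torsion]
    exact map_sub (hcov.mk' _) _ _
  rw [Rform, htorsion]
  funext Z
  have hcomm := congrFun (contr_covD nab X Y (covD nab Y ω)) Z
  simp only [contr, Pi.sub_apply, Pi.add_apply] at hcomm ⊢
  linear_combination hcomm

section Frame

variable {n : ℕ} (e : Fin n → Derivation ℝ A A) (g : Derivation ℝ A A → Derivation ℝ A A → A)

theorem map_eq_sum_frame {M : Type*} [AddCommMonoid M] [Module A M]
    {f : Derivation ℝ A A → M} (hf : IsLinearMap A f)
    (he_expand : ∀ X : Derivation ℝ A A, X = ∑ i, g X (e i) • e i) (V : Derivation ℝ A A) :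
    f V = ∑ j, g V (e j) • f (e j) := by
  calc f V = hf.mk' f (∑ i, g V (e i) • e i) := by rw [IsLinearMap.mk'_apply, ← he_expand]
    _ = _ := by simp only [map_sum, map_smul, IsLinearMap.mk'_apply]

/-- Differentiating `⟨eᵢ, eⱼ⟩ = δᵢⱼ`. -/
theorem g_nab_frame_add_swap
    (hg_symm : ∀ X Y : Derivation ℝ A A, g X Y = g Y X)
    (hnab_metric : ∀ X Y Z : Derivation ℝ A A, X (g Y Z) = g (nab X Y) Z + g Y (nab X Z))
    (he_orth : ∀ i j, g (e i) (e j) = if i = j then 1 else 0) (X : Derivation ℝ A A) (i j : Fin n) :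
    g (nab X (e i)) (e j) + g (nab X (e j)) (e i) = 0 := by
  rw [hg_symm (nab X (e j)), ← hnab_metric, he_orth]
  split_ifs <;> simp

variable {nab e g} in
theorem sum_contr_nab_frame_cancel (hg_symm : ∀ X Y : Derivation ℝ A A, g X Y = g Y X)
    (hnab_metric : ∀ X Y Z : Derivation ℝ A A, X (g Y Z) = g (nab X Y) Z + g Y (nab X Z))
    (he_orth : ∀ i j, g (e i) (e j) = if i = j then 1 else 0)
    (he_expand : ∀ X : Derivation ℝ A A, X = ∑ i, g X (e i) • e i) {ω : Forms A (k + 1)}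
    (hcov : IsLinearMap A fun Y => covD nab Y ω) (hcovω : ∀ Y, IsSlotLinear (covD nab Y ω))
    (X : Derivation ℝ A A) :
    ∑ i, (contr (nab X (e i)) (covD nab (e i) ω) + contr (e i) (covD nab (nab X (e i)) ω)) = 0 := by
  have h₁ : ∀ i, contr (nab X (e i)) (covD nab (e i) ω) =
      ∑ j, g (nab X (e i)) (e j) • contr (e j) (covD nab (e i) ω) := fun i =>
    map_eq_sum_frame e g (hcovω (e i)).isLinearMap_contr he_expand _
  have h₂ : ∀ i, contr (e i) (covD nab (nab X (e i)) ω) =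
      ∑ j, g (nab X (e i)) (e j) • contr (e i) (covD nab (e j) ω) := fun i => by
    rw [map_eq_sum_frame e g hcov he_expand, contr_sum]
    rfl
  simp only [h₁, h₂, Finset.sum_add_distrib]
  rw [Finset.sum_comm, ← Finset.sum_add_distrib]
  simp only [← Finset.sum_add_distrib, ← add_smul, g_nab_frame_add_swap nab e g hg_symm hnab_metric
    he_orth, zero_smul, Finset.sum_const_zero]

end Frame

theorem sum_contract_curvature_eq
    -- the metric
    (hg_symm : ∀ X Y : Derivation ℝ A A, g X Y = g Y X)
    -- the Levi-Civita connection
    (hnab_add₁ : ∀ X Y Z : Derivation ℝ A A, nab (X + Y) Z = nab X Z + nab Y Z)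
    (hnab_smul₁ : ∀ (a : A) (X Y : Derivation ℝ A A), nab (a • X) Y = a • nab X Y)
    (hnab_add₂ : ∀ X Y Z : Derivation ℝ A A, nab X (Y + Z) = nab X Y + nab X Z)
    (hnab_leibniz : ∀ (a : A) (X Y : Derivation ℝ A A),
      nab X (a • Y) = X a • Y + a • nab X Y)
    (hnab_metric : ∀ X Y Z : Derivation ℝ A A,
      X (g Y Z) = g (nab X Y) Z + g Y (nab X Z))
    (hnab_torsion : ∀ X Y : Derivation ℝ A A, nab X Y - nab Y X = ⁅X, Y⁆)
    -- the orthonormal frame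
    (he_orth : ∀ i j, g (e i) (e j) = if i = j then 1 else 0)
    (he_expand : ∀ X : Derivation ℝ A A, X = ∑ i, g X (e i) • e i)
    -- a `p`-form, `p ≥ 1` (degree `p + 1` below)
    (p : ℕ) (ω : Forms A (p + 1))
    (hω_add : ∀ (Z : Fin (p + 1) → Derivation ℝ A A) (i : Fin (p + 1))
      (x y : Derivation ℝ A A),
      ω (Function.update Z i (x + y)) =
        ω (Function.update Z i x) + ω (Function.update Z i y))
    (hω_smul : ∀ (Z : Fin (p + 1) → Derivation ℝ A A) (i : Fin (p + 1))
      (a : A) (x : Derivation ℝ A A),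
      ω (Function.update Z i (a • x)) = a * ω (Function.update Z i x))
    (X : Derivation ℝ A A) :
    ∑ i, contr (e i) (Rform nab X (e i) ω) =
      -(covD nab X (codiffS nab e ω)) + codiffS nab e (covD nab X ω) +
        ∑ i, ∑ j, g (nab (e j) X) (e i) • contr (e j) (covD nab (e i) ω) := by
  have hω : IsSlotLinear ω := fun Z i => ⟨hω_add Z i, hω_smul Z i⟩
  have hnab : ∀ Z, IsLinearMap A (nab · Z) := fun Z =>
    ⟨fun X Y => hnab_add₁ X Y Z, fun a X => hnab_smul₁ a X Z⟩
  have hcov := isLinearMap_covD nab hnab hω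
  have hexpand : ∑ i, ∑ j, g (nab (e j) X) (e i) • contr (e j) (covD nab (e i) ω) =
      ∑ j, contr (e j) (covD nab (nab (e j) X) ω) := by
    rw [Finset.sum_comm]
    refine Finset.sum_congr rfl fun j _ => ?_
    rw [map_eq_sum_frame e g hcov he_expand, contr_sum]
    rfl
  simp only [contr_Rform_self nab hnab_torsion hcov, Finset.sum_sub_distrib, Finset.sum_add_distrib,
    sum_contr_nab_frame_cancel hg_symm hnab_metric he_orth he_expand hcov
      (hω.covD nab hnab_add₂ hnab_leibniz), hexpand, codiffS, covD_neg, covD_sum, neg_neg]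
  abel

end RiemannModel
end

section
/- Let (M, g) be a Riemannian manifold, X a vector field, and ω a parallel p-form (∇ω = 0, p ≥ 1). Then the Weitzenböck curvature operator satisfies ℛ_{p-1}(ι(X)ω) = ι(Ric(X))ω, where ℛ_{p-1}η = -Σ_{i,j} e^i ∧ ι(e_j)(R(e_i, e_j)η) for a local orthonormal frame (e_i) with dual coframe (e^i), and Ric(X) is the Ricci endomorphism applied to X. -/
/- An algebraic (Koszul-style) model of a Riemannian manifold: the commutative
`ℝ`-algebra `A` plays the role of the ring of smooth functions, derivations of
`A` play the role of vector fields, `g` is the Riemannian metric, `nab` the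
Levi-Civita connection (`A`-linear in the first slot, a derivation in the
second, metric and torsion-free), `e` a (local) orthonormal frame, and
`k`-forms are alternating `A`-multilinear functions
`(Fin k → Derivation ℝ A A) → A`. -/

namespace RiemannModel

variable {A : Type*} [CommRing A] [Algebra ℝ A]

variable (nab : Derivation ℝ A A → Derivation ℝ A A → Derivation ℝ A A)
variable (g : Derivation ℝ A A → Derivation ℝ A A → A)
variable {n : ℕ} (e : Fin n → Derivation ℝ A A)

/-!
Because `∇ω = 0`, the curvature `R(U, V)`, acting on forms as a derivation, annihilates `ω`;
in particular `R(U, V) (ι_X ω) = ι_{R(U,V)X} ω`. Expanding in the frame, the value of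
`ℛ(ι_X ω)` on `Z₀, …, Z_p` becomes `-∑ₐ (-1)ᵃ ∑ⱼ ω(R(Zₐ, eⱼ)X, eⱼ, …)`, while applying the
annihilation identity to `ω(R(X, eⱼ)eⱼ, Z₀, …)` gives
`ι(Ric X)ω = ∑ₐ (-1)ᵃ ∑ⱼ ω(R(X, eⱼ)Zₐ, eⱼ, …)`. Their sum vanishes: expanding the first slot in the frame yields coefficients
`⟨R(Zₐ, eⱼ)X + R(X, eⱼ)Zₐ, eᵢ⟩`, symmetric in `i, j` by the pair symmetry of the curvature
tensor, against `ω(eᵢ, eⱼ, …)`, which is skew.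
-/

theorem _root_.Fintype.sum_sum_sub_sum_sum_eq_sum_diag {ι M : Type*} [Fintype ι]
    [AddCommGroup M] (F G : ι → ι → M) (hoff : ∀ m l, m ≠ l → F m l = G l m) :
    ∑ m, ∑ l, F m l - ∑ m, ∑ l, G m l = ∑ m, (F m m - G m m) := by
  rw [Finset.sum_comm (f := G), ← Finset.sum_sub_distrib]
  refine Finset.sum_congr rfl fun m _ => ?_
  rw [← Finset.sum_sub_distrib]
  exact Finset.sum_eq_single m (fun l _ hlm => sub_eq_zero.2 (hoff m l (Ne.symm hlm)))
    (by simp)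

theorem _root_.Fintype.sum_sum_eq_zero_of_antisymm {ι M : Type*} [Fintype ι] [AddCommGroup M]
    [IsAddTorsionFree M] (f : ι → ι → M) (hf : ∀ j k, f k j = -f j k) :
    ∑ j, ∑ k, f j k = 0 := by
  refine self_eq_neg.mp ?_
  conv_lhs => rw [Finset.sum_comm]
  rw [← Finset.sum_neg_distrib]
  exact Finset.sum_congr rfl fun k _ => by
    rw [← Finset.sum_neg_distrib]; exact Finset.sum_congr rfl fun j _ => hf k j

instance isAddTorsionFree_of_module_real {M : Type*} [AddCommGroup M] [Module ℝ M] :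
    IsAddTorsionFree M :=
  @IsAddTorsionFree.of_module_rat M _ (Module.compHom M (algebraMap ℚ ℝ))

theorem _root_.Derivation.smul_lie {R B : Type*} [CommRing R] [CommRing B] [Algebra R B]
    (a : B) (U V : Derivation R B B) : ⁅a • U, V⁆ = a • ⁅U, V⁆ - V a • U := by
  ext f
  simp only [Derivation.commutator_apply, Derivation.sub_apply, Derivation.smul_apply,
    smul_eq_mul, Derivation.leibniz]
  ring

theorem _root_.MultilinearMap.map_cons_sub {R M N : Type*} [CommRing R] [AddCommGroup M]
    [Module R M] [AddCommGroup N] [Module R N] {k : ℕ}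
    (Ω : MultilinearMap R (fun _ : Fin (k + 1) => M) N) (x y : M) (v : Fin k → M) :
    Ω (Fin.cons (x - y) v) = Ω (Fin.cons x v) - Ω (Fin.cons y v) := by
  simpa [Fin.update_cons_zero] using Ω.map_update_sub (Fin.cons 0 v) 0 x y

theorem _root_.MultilinearMap.map_cons_sum {R M N ι : Type*} [CommRing R] [AddCommGroup M]
    [Module R M] [AddCommGroup N] [Module R N] {k : ℕ}
    (Ω : MultilinearMap R (fun _ : Fin (k + 1) => M) N) (s : Finset ι) (x : ι → M)
    (v : Fin k → M) :
    Ω (Fin.cons (∑ i ∈ s, x i) v) = ∑ i ∈ s, Ω (Fin.cons (x i) v) := by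
  simpa [Fin.update_cons_zero] using Ω.map_update_sum s 0 x (Fin.cons 0 v)

theorem _root_.AlternatingMap.map_cons_update {R M N : Type*} [CommRing R] [AddCommGroup M]
    [Module R M] [AddCommGroup N] [Module R N] {k : ℕ} (Ω : M [⋀^Fin (k + 2)]→ₗ[R] N)
    (u w : M) (v : Fin (k + 1) → M) (a : Fin (k + 1)) :
    Ω (Fin.cons u (Function.update v a w)) =
      -((-1 : R) ^ (a : ℕ) • Ω (Fin.cons w (Fin.cons u (a.removeNth v)))) := by
  rw [← Fin.insertNth_removeNth, ← Fin.insertNth_succ_cons, Ω.map_insertNth, Fin.val_succ,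
    pow_succ, mul_neg_one, neg_smul, ← Int.cast_smul_eq_zsmul R]
  push_cast
  rfl

theorem _root_.AlternatingMap.map_cons_cons_swap {R M N : Type*} [CommRing R] [AddCommGroup M]
    [Module R M] [AddCommGroup N] [Module R N] {k : ℕ} (Ω : M [⋀^Fin (k + 2)]→ₗ[R] N)
    (u v : M) (w : Fin k → M) :
    Ω (Fin.cons u (Fin.cons v w)) = -Ω (Fin.cons v (Fin.cons u w)) := by
  simpa [Fin.removeNth_zero] using Ω.map_cons_update u v (Fin.cons v w) 0

section

variable {nab g e}
variable (hg_symm : ∀ X Y : Derivation ℝ A A, g X Y = g Y X)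
variable (hg_add : ∀ X Y Z : Derivation ℝ A A, g (X + Y) Z = g X Z + g Y Z)
variable (hnab_add₁ : ∀ X Y Z : Derivation ℝ A A, nab (X + Y) Z = nab X Z + nab Y Z)
variable (hnab_smul₁ : ∀ (a : A) (X Y : Derivation ℝ A A), nab (a • X) Y = a • nab X Y)
variable (hnab_add₂ : ∀ X Y Z : Derivation ℝ A A, nab X (Y + Z) = nab X Y + nab X Z)
variable (hnab_leibniz : ∀ (a : A) (X Y : Derivation ℝ A A),
  nab X (a • Y) = X a • Y + a • nab X Y)
variable (hnab_metric : ∀ X Y Z : Derivation ℝ A A,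
  X (g Y Z) = g (nab X Y) Z + g Y (nab X Z))
variable (hnab_torsion : ∀ X Y : Derivation ℝ A A, nab X Y - nab Y X = ⁅X, Y⁆)
variable (he_expand : ∀ X : Derivation ℝ A A, X = ∑ i, g X (e i) • e i)

include hnab_add₁ in
theorem nab_sub_left (X Y Z : Derivation ℝ A A) : nab (X - Y) Z = nab X Z - nab Y Z :=
  map_sub (AddMonoidHom.mk' (nab · Z) (hnab_add₁ · · Z)) X Y

include hnab_add₂ in
theorem nab_sub_right (X Y Z : Derivation ℝ A A) : nab X (Y - Z) = nab X Y - nab X Z :=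
  map_sub (AddMonoidHom.mk' (nab X) (hnab_add₂ X)) Y Z

include hnab_add₁ in
theorem nab_neg_left (X Z : Derivation ℝ A A) : nab (-X) Z = -nab X Z :=
  map_neg (AddMonoidHom.mk' (nab · Z) (hnab_add₁ · · Z)) X

include hg_add in
theorem metric_neg_left (X Z : Derivation ℝ A A) : g (-X) Z = -g X Z :=
  map_neg (AddMonoidHom.mk' (g · Z) (hg_add · · Z)) X

include hg_add in
theorem metric_sub_left (X Y Z : Derivation ℝ A A) : g (X - Y) Z = g X Z - g Y Z :=
  map_sub (AddMonoidHom.mk' (g · Z) (hg_add · · Z)) X Y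

include hg_symm hg_add in
theorem metric_sub_right (X Y Z : Derivation ℝ A A) : g X (Y - Z) = g X Y - g X Z := by
  rw [hg_symm, metric_sub_left hg_add, hg_symm Y, hg_symm Z]

include hnab_add₁ in
theorem Rvec_swap (U V W : Derivation ℝ A A) : Rvec nab U V W = -Rvec nab V U W := by
  rw [Rvec, Rvec, ← lie_skew, nab_neg_left hnab_add₁]
  abel

include hnab_add₁ hnab_add₂ in
theorem Rvec_sum_left {ι : Type*} (s : Finset ι) (f : ι → Derivation ℝ A A)
    (V W : Derivation ℝ A A) :
    Rvec nab (∑ i ∈ s, f i) V W = ∑ i ∈ s, Rvec nab (f i) V W := by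
  refine map_sum (AddMonoidHom.mk' (Rvec nab · V W) fun U U' => ?_) f s
  simp only [Rvec, hnab_add₁, hnab_add₂, add_lie]
  abel

include hnab_add₁ hnab_smul₁ hnab_leibniz in
theorem Rvec_smul_left (a : A) (U V W : Derivation ℝ A A) :
    Rvec nab (a • U) V W = a • Rvec nab U V W := by
  rw [Rvec, Rvec, hnab_smul₁, hnab_smul₁, hnab_leibniz, Derivation.smul_lie,
    nab_sub_left hnab_add₁, hnab_smul₁, hnab_smul₁]
  simp only [smul_sub]
  abel

include hnab_add₂ hnab_torsion in
theorem Rvec_bianchi (U V W : Derivation ℝ A A) :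
    Rvec nab U V W + Rvec nab V W U + Rvec nab W U V = 0 := by
  have nab_lie : ∀ P Q R : Derivation ℝ A A,
      nab ⁅P, Q⁆ R = nab R (nab P Q) - nab R (nab Q P) - ⁅R, ⁅P, Q⁆⁆ := fun P Q R => by
    rw [← nab_sub_right hnab_add₂, hnab_torsion P Q, ← lie_skew R, ← hnab_torsion ⁅P, Q⁆ R]
    abel
  rw [Rvec, Rvec, Rvec, nab_lie U V W, nab_lie V W U, nab_lie W U V, ← lie_jacobi W U V]
  abel

include hg_symm hg_add hnab_metric in
theorem metric_Rvec_add_metric_Rvec_eq_zero (U V W T : Derivation ℝ A A) :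
    g (Rvec nab U V W) T + g W (Rvec nab U V T) = 0 := by
  have hUV := hnab_metric U (nab V W) T
  have hU := hnab_metric U W (nab V T)
  have hVU := hnab_metric V (nab U W) T
  have hV := hnab_metric V W (nab U T)
  have hlie := hnab_metric ⁅U, V⁆ W T
  rw [Derivation.commutator_apply, hnab_metric V, hnab_metric U, map_add, map_add] at hlie
  rw [Rvec, Rvec, metric_sub_left hg_add, metric_sub_left hg_add,
    metric_sub_right hg_symm hg_add, metric_sub_right hg_symm hg_add]
  linear_combination hVU + hV - hUV - hU + hlie

include hg_symm hg_add hnab_add₁ hnab_add₂ hnab_metric hnab_torsion in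
theorem metric_Rvec_pair_comm (Z X Y T : Derivation ℝ A A) :
    g (Rvec nab Z X Y) T = g (Rvec nab Y T Z) X := by
  have skew₃₄ : ∀ P Q R S, g (Rvec nab P Q R) S = -g (Rvec nab P Q S) R := fun P Q R S => by
    linear_combination metric_Rvec_add_metric_Rvec_eq_zero hg_symm hg_add hnab_metric P Q R S
      - hg_symm R (Rvec nab P Q S)
  have skew₁₂ : ∀ P Q R S, g (Rvec nab P Q R) S = -g (Rvec nab Q P R) S := fun P Q R S => by
    rw [Rvec_swap hnab_add₁ P Q R, metric_neg_left hg_add]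
  have bianchi : ∀ P Q R S,
      g (Rvec nab P Q R) S + g (Rvec nab Q R P) S + g (Rvec nab R P Q) S = 0 :=
    fun P Q R S => by
      have h := Rvec_bianchi hnab_add₂ hnab_torsion P Q R
      rw [add_eq_zero_iff_eq_neg] at h
      rw [← hg_add, h, metric_neg_left hg_add, neg_add_cancel]
  -- the Bianchi identity summed over the cyclic shifts of `(X, Y, Z, T)`
  have twice : (g (Rvec nab Z X Y) T - g (Rvec nab Y T Z) X)
      + (g (Rvec nab Z X Y) T - g (Rvec nab Y T Z) X) = 0 := by
    linear_combination bianchi X Y Z T + bianchi Y Z T X + bianchi Z T X Y + bianchi T X Y Z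
      - skew₃₄ X Y T Z - skew₃₄ Y Z T X - skew₃₄ Z T X Y - skew₃₄ T X Y Z
      - skew₁₂ X Z T Y + skew₃₄ Z X T Y - skew₁₂ Y T X Z + skew₃₄ T Y X Z - 2 * skew₁₂ T Y Z X
  exact sub_eq_zero.mp (self_eq_neg.mp (eq_neg_of_add_eq_zero_left twice))

theorem apply_eq_sum_of_covD_eq_zero {k : ℕ} {ω : Forms A k} {Y : Derivation ℝ A A}
    (hY : covD nab Y ω = 0) (Z : Fin k → Derivation ℝ A A) :
    Y (ω Z) = ∑ i, ω (Function.update Z i (nab Y (Z i))) :=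
  sub_eq_zero.mp (congrFun hY Z)

theorem covD_contr_of_covD_eq_zero {k : ℕ} {ω : Forms A (k + 1)} {Y : Derivation ℝ A A}
    (hY : covD nab Y ω = 0) (X : Derivation ℝ A A) :
    covD nab Y (contr X ω) = contr (nab Y X) ω := by
  funext Z
  have h := apply_eq_sum_of_covD_eq_zero hY (Fin.cons X Z)
  simp only [Fin.sum_univ_succ, Fin.cons_zero, Fin.cons_succ, Fin.update_cons_zero,
    ← Fin.cons_update] at h
  simp only [covD, contr, h]
  abel

/-- The curvature, acting as a derivation, annihilates a parallel form. -/
theorem sum_map_update_Rvec_eq_zero_of_parallel {k : ℕ}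
    (Ω : MultilinearMap A (fun _ : Fin k => Derivation ℝ A A) A)
    (hpar : ∀ Y, covD nab Y Ω = 0) (U V : Derivation ℝ A A) (Z : Fin k → Derivation ℝ A A) :
    ∑ m, Ω (Function.update Z m (Rvec nab U V (Z m))) = 0 := by
  have second : ∀ U V : Derivation ℝ A A, U (V (Ω Z)) = ∑ m, ∑ l,
      Ω (Function.update (Function.update Z m (nab V (Z m))) l
        (nab U (Function.update Z m (nab V (Z m)) l))) := fun U V => by
    rw [apply_eq_sum_of_covD_eq_zero (hpar V), map_sum]
    exact Finset.sum_congr rfl fun m _ => apply_eq_sum_of_covD_eq_zero (hpar U) _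
  have h := apply_eq_sum_of_covD_eq_zero (hpar ⁅U, V⁆) Z
  -- the mixed second derivatives cancel in `U (V (Ω Z)) - V (U (Ω Z))`
  rw [Derivation.commutator_apply, second, second,
    Fintype.sum_sum_sub_sum_sum_eq_sum_diag _ _ fun m l hml => by
      simp only [Function.update_of_ne hml, Function.update_of_ne hml.symm,
        Function.update_comm hml]] at h
  simp only [Function.update_self, Function.update_idem] at h
  simp only [Rvec, Ω.map_update_sub, Finset.sum_sub_distrib, ← h, sub_self]

theorem Rform_contr_of_parallel {k : ℕ}
    (Ω : MultilinearMap A (fun _ : Fin (k + 1) => Derivation ℝ A A) A)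
    (hpar : ∀ Y, covD nab Y Ω = 0) (U V X : Derivation ℝ A A) :
    Rform nab U V (contr X Ω) = contr (Rvec nab U V X) Ω := by
  funext Z
  simp only [Rform, covD_contr_of_covD_eq_zero (hpar _), Pi.sub_apply, contr, Rvec,
    MultilinearMap.map_cons_sub]

theorem map_cons_Rvec_eq_neg_sum_of_parallel {k : ℕ}
    (Ω : MultilinearMap A (fun _ : Fin (k + 1) => Derivation ℝ A A) A)
    (hpar : ∀ Y, covD nab Y Ω = 0) (U V W : Derivation ℝ A A) (Z : Fin k → Derivation ℝ A A) :
    Ω (Fin.cons (Rvec nab U V W) Z) =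
      -∑ a, Ω (Fin.cons W (Function.update Z a (Rvec nab U V (Z a)))) := by
  have h := sum_map_update_Rvec_eq_zero_of_parallel Ω hpar U V (Fin.cons W Z)
  simp only [Fin.sum_univ_succ, Fin.cons_zero, Fin.cons_succ, Fin.update_cons_zero,
    ← Fin.cons_update] at h
  exact eq_neg_of_add_eq_zero_left h

theorem contr_ricci_eq_zero_of_parallel
    (Ω : MultilinearMap A (fun _ : Fin 1 => Derivation ℝ A A) A)
    (hpar : ∀ Y, covD nab Y Ω = 0) (X : Derivation ℝ A A) :
    contr (ricci nab e X) Ω = 0 := by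
  funext Z
  simp [contr, ricci, Ω.map_cons_sum, map_cons_Rvec_eq_neg_sum_of_parallel Ω hpar]

theorem contr_ricci_apply_of_parallel {k : ℕ} (Ω : Derivation ℝ A A [⋀^Fin (k + 2)]→ₗ[A] A)
    (hpar : ∀ Y, covD nab Y Ω = 0) (X : Derivation ℝ A A) (Z : Fin (k + 1) → Derivation ℝ A A) :
    contr (ricci nab e X) Ω Z = ∑ a : Fin (k + 1), (-1) ^ (a : ℕ) *
      ∑ j, Ω (Fin.cons (Rvec nab X (e j) (Z a)) (Fin.cons (e j) (a.removeNth Z))) := by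
  have hj : ∀ j, Ω (Fin.cons (Rvec nab X (e j) (e j)) Z) = ∑ a : Fin (k + 1), (-1) ^ (a : ℕ) *
      Ω (Fin.cons (Rvec nab X (e j) (Z a)) (Fin.cons (e j) (a.removeNth Z))) := fun j => by
    rw [← Ω.coe_multilinearMap, map_cons_Rvec_eq_neg_sum_of_parallel _ hpar,
      ← Finset.sum_neg_distrib]
    simp only [Ω.coe_multilinearMap, Ω.map_cons_update, neg_neg, smul_eq_mul]
  rw [contr, ricci, ← Ω.coe_multilinearMap, MultilinearMap.map_cons_sum, Ω.coe_multilinearMap]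
  simp only [hj, Finset.mul_sum]
  exact Finset.sum_comm

include he_expand in
theorem map_cons_eq_sum_metric_mul {k : ℕ}
    (Ω : MultilinearMap A (fun _ : Fin (k + 1) => Derivation ℝ A A) A)
    (V : Derivation ℝ A A) (T : Fin k → Derivation ℝ A A) :
    Ω (Fin.cons V T) = ∑ i, g V (e i) * Ω (Fin.cons (e i) T) := by
  have h := Ω.map_update_sum Finset.univ 0 (fun i => g V (e i) • e i) (Fin.cons V T)
  simpa only [← he_expand V, Fin.update_cons_zero, MultilinearMap.cons_smul, smul_eq_mul]
    using h

include hg_symm hnab_add₁ hnab_smul₁ hnab_add₂ hnab_leibniz he_expand in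
theorem sum_metric_mul_map_cons_Rvec {k : ℕ}
    (Ω : MultilinearMap A (fun _ : Fin (k + 1) => Derivation ℝ A A) A)
    (V W X : Derivation ℝ A A) (T : Fin k → Derivation ℝ A A) :
    ∑ i, g (e i) V * Ω (Fin.cons (Rvec nab (e i) W X) T) = Ω (Fin.cons (Rvec nab V W X) T) := by
  conv_rhs => rw [he_expand V, Rvec_sum_left hnab_add₁ hnab_add₂, Ω.map_cons_sum]
  simp only [Rvec_smul_left hnab_add₁ hnab_smul₁ hnab_leibniz, Ω.cons_smul, smul_eq_mul,
    hg_symm V]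

include hg_symm hnab_add₁ hnab_smul₁ hnab_add₂ hnab_leibniz he_expand in
theorem Rcal_contr_apply_of_parallel {k : ℕ}
    (Ω : MultilinearMap A (fun _ : Fin (k + 2) => Derivation ℝ A A) A)
    (hpar : ∀ Y, covD nab Y Ω = 0) (X : Derivation ℝ A A) (Z : Fin (k + 1) → Derivation ℝ A A) :
    Rcal nab g e (contr X Ω) Z = -∑ a : Fin (k + 1), (-1) ^ (a : ℕ) *
      ∑ j, Ω (Fin.cons (Rvec nab (Z a) (e j) X) (Fin.cons (e j) (a.removeNth Z))) := by
  simp only [Rcal, Pi.neg_apply, Finset.sum_apply, wedge1, flat, contr,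
    Rform_contr_of_parallel Ω hpar]
  rw [Finset.sum_comm_cycle]
  congr 1
  refine Finset.sum_congr rfl fun a _ => ?_
  rw [Finset.sum_comm, Finset.mul_sum]
  refine Finset.sum_congr rfl fun j _ => ?_
  rw [← sum_metric_mul_map_cons_Rvec hg_symm hnab_add₁ hnab_smul₁ hnab_add₂ hnab_leibniz
    he_expand, Finset.mul_sum]
  exact Finset.sum_congr rfl fun i _ => mul_assoc _ _ _

include hg_symm hg_add hnab_add₁ hnab_add₂ hnab_metric hnab_torsion he_expand in
theorem sum_map_cons_Rvec_add_map_cons_Rvec_eq_zero {k : ℕ}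
    (Ω : Derivation ℝ A A [⋀^Fin (k + 2)]→ₗ[A] A) (V X : Derivation ℝ A A)
    (T : Fin k → Derivation ℝ A A) :
    ∑ j, (Ω (Fin.cons (Rvec nab V (e j) X) (Fin.cons (e j) T)) +
      Ω (Fin.cons (Rvec nab X (e j) V) (Fin.cons (e j) T))) = 0 := by
  have expand := fun j W => map_cons_eq_sum_metric_mul he_expand Ω.toMultilinearMap W
    (Fin.cons (e j) T)
  simp only [Ω.coe_multilinearMap] at expand
  -- the coefficient `⟨R(V, eⱼ)X + R(X, eⱼ)V, eᵢ⟩` is symmetric in `i, j` while `Ω` is skew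
  calc _ = ∑ j, ∑ i, (g (Rvec nab V (e j) X) (e i) + g (Rvec nab X (e j) V) (e i)) *
        Ω (Fin.cons (e i) (Fin.cons (e j) T)) := by
        refine Finset.sum_congr rfl fun j _ => ?_
        rw [expand j (Rvec nab V (e j) X), expand j (Rvec nab X (e j) V),
          ← Finset.sum_add_distrib]
        simp only [add_mul]
    _ = 0 := by
        refine Fintype.sum_sum_eq_zero_of_antisymm _ fun j i => ?_
        rw [metric_Rvec_pair_comm hg_symm hg_add hnab_add₁ hnab_add₂ hnab_metric hnab_torsion
            V (e i) X (e j),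
          metric_Rvec_pair_comm hg_symm hg_add hnab_add₁ hnab_add₂ hnab_metric hnab_torsion
            X (e i) V (e j), Ω.map_cons_cons_swap (e j)]
        ring

end

theorem Rcal_contract_parallel_eq_contract_ricci
    -- the metric
    (hg_symm : ∀ X Y : Derivation ℝ A A, g X Y = g Y X)
    (hg_add : ∀ X Y Z : Derivation ℝ A A, g (X + Y) Z = g X Z + g Y Z)
    -- the Levi-Civita connection
    (hnab_add₁ : ∀ X Y Z : Derivation ℝ A A, nab (X + Y) Z = nab X Z + nab Y Z)
    (hnab_smul₁ : ∀ (a : A) (X Y : Derivation ℝ A A), nab (a • X) Y = a • nab X Y)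
    (hnab_add₂ : ∀ X Y Z : Derivation ℝ A A, nab X (Y + Z) = nab X Y + nab X Z)
    (hnab_leibniz : ∀ (a : A) (X Y : Derivation ℝ A A),
      nab X (a • Y) = X a • Y + a • nab X Y)
    (hnab_metric : ∀ X Y Z : Derivation ℝ A A,
      X (g Y Z) = g (nab X Y) Z + g Y (nab X Z))
    (hnab_torsion : ∀ X Y : Derivation ℝ A A, nab X Y - nab Y X = ⁅X, Y⁆)
    -- the orthonormal frame
    (he_expand : ∀ X : Derivation ℝ A A, X = ∑ i, g X (e i) • e i)
    -- a parallel `p`-form, `p ≥ 1` (degree `p + 1` below)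
    (p : ℕ) (ω : Forms A (p + 1))
    (hω_add : ∀ (Z : Fin (p + 1) → Derivation ℝ A A) (i : Fin (p + 1))
      (x y : Derivation ℝ A A),
      ω (Function.update Z i (x + y)) =
        ω (Function.update Z i x) + ω (Function.update Z i y))
    (hω_smul : ∀ (Z : Fin (p + 1) → Derivation ℝ A A) (i : Fin (p + 1))
      (a : A) (x : Derivation ℝ A A),
      ω (Function.update Z i (a • x)) = a * ω (Function.update Z i x))
    (hω_alt : ∀ (Z : Fin (p + 1) → Derivation ℝ A A) (i j : Fin (p + 1)),
      i ≠ j → Z i = Z j → ω Z = 0)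
    (hω_par : ∀ Y : Derivation ℝ A A, covD nab Y ω = 0)
    (X : Derivation ℝ A A) :
    Rcal nab g e (contr X ω) = contr (ricci nab e X) ω := by
  let Ω : Derivation ℝ A A [⋀^Fin (p + 1)]→ₗ[A] A :=
    { toFun := ω
      map_update_add' := fun Z i x y => by convert hω_add Z i x y
      map_update_smul' := fun Z i a x => by rw [smul_eq_mul]; convert hω_smul Z i a x
      map_eq_zero_of_eq' := fun Z i j hZ hij => hω_alt Z i j hij hZ }
  have hpar : ∀ Y, covD nab Y Ω = 0 := hω_par
  change Rcal nab g e (contr X Ω) = contr (ricci nab e X) Ω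
  cases p with
  | zero => exact (contr_ricci_eq_zero_of_parallel Ω.toMultilinearMap hpar X).symm
  | succ p =>
    funext Z
    have hRcal := Rcal_contr_apply_of_parallel hg_symm hnab_add₁ hnab_smul₁ hnab_add₂
      hnab_leibniz he_expand Ω.toMultilinearMap hpar X Z
    rw [Ω.coe_multilinearMap] at hRcal
    rw [hRcal, contr_ricci_apply_of_parallel Ω hpar, neg_eq_iff_add_eq_zero,
      ← Finset.sum_add_distrib]
    refine Finset.sum_eq_zero fun a _ => ?_
    rw [← mul_add, ← Finset.sum_add_distrib, sum_map_cons_Rvec_add_map_cons_Rvec_eq_zero hg_symm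
      hg_add hnab_add₁ hnab_add₂ hnab_metric hnab_torsion he_expand, mul_zero]

end RiemannModel
end
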